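/- Let σ > 0 and let μ satisfy 0 < μ < μ₂(σ), where μ₂(σ) = 1/(σ + 4). Then the radicand (σ² + 4σ)μ² − 2(σ + 2)μ + 1 is strictly positive, the convergent displacement satisfies −1/2 < δ(σ,μ) < 0, and both points (1/2 + δ(σ,μ), 1/2 + δ(σ,μ)) and (1/2 − δ(σ,μ), 1/2 − δ(σ,μ)) are equilibria of the fully symmetric convergence–divergence game. -/

import Mathlib

/-!
The radicand factors as `(1 - σμ)(1 - (σ + 4)μ)`, positive for `0 < μ < 1/(σ + 4)`. On the
diagonal `x = y` the two payoff differences coincide, and with `x = 1/2 + t` one has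
`2(σμ - 1) · F₁ = t · (4(σμ - 1)² t² - R)`, so `t = ±√R / (2(σμ - 1)) = ±δ` are equilibria.
Finally `δ > -1/2` amounts to `R < (1 - σμ)²`, and `(1 - σμ)² - R = 4μ(1 - σμ) > 0`.
-/

noncomputable def F1 (σ μ x y : ℝ) : ℝ :=
  ((1 - x) - μ) * x * (x + σ * x * (1 - y)) - (x - μ) * (1 - x) * ((1 - x) + σ * (1 - x) * y)

noncomputable def F2 (σ μ x y : ℝ) : ℝ :=
  ((1 - y) - μ) * y * (y + σ * y * (1 - x)) - (y - μ) * (1 - y) * ((1 - y) + σ * (1 - y) * x)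

noncomputable def deltaD (σ μ : ℝ) : ℝ :=
  Real.sqrt ((σ^2 + 4 * σ) * μ^2 - 2 * (σ + 2) * μ + 1) / (2 * (σ * μ - 1))

def radicand (σ μ : ℝ) : ℝ := (σ^2 + 4 * σ) * μ^2 - 2 * (σ + 2) * μ + 1

def IsEquilibrium (σ μ x y : ℝ) : Prop := F1 σ μ x y = 0 ∧ F2 σ μ x y = 0

theorem radicand_eq_mul (σ μ : ℝ) :
    radicand σ μ = (σ * μ - 1) * ((σ + 4) * μ - 1) := by
  unfold radicand; ring

theorem F2_diag (σ μ x : ℝ) : F2 σ μ x x = F1 σ μ x x := rfl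

theorem mul_F1_half_add_diag (σ μ t : ℝ) :
    2 * (σ * μ - 1) * F1 σ μ (1/2 + t) (1/2 + t) =
      t * ((2 * (σ * μ - 1) * t) ^ 2 - radicand σ μ) := by
  unfold F1 radicand; ring

section

variable {σ μ : ℝ}

theorem radicand_pos (hσμ : σ * μ < 1) (hμ : (σ + 4) * μ < 1) : 0 < radicand σ μ := by
  rw [radicand_eq_mul]
  exact mul_pos_of_neg_of_neg (by linarith) (by linarith)

theorem isEquilibrium_half_add_diag (hσμ : σ * μ ≠ 1) {t : ℝ}
    (ht : (2 * (σ * μ - 1) * t) ^ 2 = radicand σ μ) :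
    IsEquilibrium σ μ (1/2 + t) (1/2 + t) := by
  have hF1 : F1 σ μ (1/2 + t) (1/2 + t) = 0 := by
    have h := mul_F1_half_add_diag σ μ t
    rw [ht, sub_self, mul_zero] at h
    exact (mul_eq_zero.mp h).resolve_left (by intro h0; apply hσμ; linarith)
  exact ⟨hF1, by rw [F2_diag, hF1]⟩

theorem sq_two_mul_deltaD (hR : 0 ≤ radicand σ μ) (hσμ : σ * μ ≠ 1) :
    (2 * (σ * μ - 1) * deltaD σ μ) ^ 2 = radicand σ μ := by
  have hden : 2 * (σ * μ - 1) ≠ 0 := by intro h0; apply hσμ; linarith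
  rw [deltaD, mul_div_cancel₀ _ hden]
  exact Real.sq_sqrt hR

theorem deltaD_neg (hR : 0 < radicand σ μ) (hσμ : σ * μ < 1) : deltaD σ μ < 0 :=
  div_neg_of_pos_of_neg (Real.sqrt_pos.mpr hR) (by linarith)

theorem neg_half_lt_deltaD (hμ : 0 < μ) (hσμ : σ * μ < 1) : -(1/2) < deltaD σ μ := by
  have hsqrt : Real.sqrt (radicand σ μ) < 1 - σ * μ := by
    rw [Real.sqrt_lt' (by linarith)]
    have hgap : (1 - σ * μ) ^ 2 - radicand σ μ = 4 * μ * (1 - σ * μ) := by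
      unfold radicand; ring
    nlinarith
  show -(1/2) < Real.sqrt (radicand σ μ) / (2 * (σ * μ - 1))
  rw [lt_div_iff_of_neg (by linarith)]
  linarith

end

theorem convergent_equilibria_exist_general (σ μ : ℝ)
    (hlo : 0 < μ) (hhi : μ < 1 / (σ + 4)) :
    0 < (σ^2 + 4 * σ) * μ^2 - 2 * (σ + 2) * μ + 1 ∧
    -(1/2) < deltaD σ μ ∧ deltaD σ μ < 0 ∧
    (F1 σ μ (1/2 + deltaD σ μ) (1/2 + deltaD σ μ) = 0 ∧
      F2 σ μ (1/2 + deltaD σ μ) (1/2 + deltaD σ μ) = 0) ∧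
    (F1 σ μ (1/2 - deltaD σ μ) (1/2 - deltaD σ μ) = 0 ∧
      F2 σ μ (1/2 - deltaD σ μ) (1/2 - deltaD σ μ) = 0) := by
  have hμ4 : (σ + 4) * μ < 1 := by
    rwa [lt_div_iff₀ (one_div_pos.mp (hlo.trans hhi)), mul_comm] at hhi
  have hσμ : σ * μ < 1 := by linarith
  have hR : 0 < radicand σ μ := radicand_pos hσμ hμ4
  have hd := sq_two_mul_deltaD hR.le hσμ.ne
  refine ⟨hR, neg_half_lt_deltaD hlo hσμ, deltaD_neg hR hσμ,
    isEquilibrium_half_add_diag hσμ.ne hd, ?_⟩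
  rw [sub_eq_add_neg]
  exact isEquilibrium_half_add_diag hσμ.ne (by rw [mul_neg, neg_sq, hd])

theorem convergent_equilibria_exist (σ μ : ℝ) (hσ : 0 < σ)
    (hlo : 0 < μ) (hhi : μ < 1 / (σ + 4)) :
    0 < (σ^2 + 4 * σ) * μ^2 - 2 * (σ + 2) * μ + 1 ∧
    -(1/2) < deltaD σ μ ∧ deltaD σ μ < 0 ∧
    (F1 σ μ (1/2 + deltaD σ μ) (1/2 + deltaD σ μ) = 0 ∧
      F2 σ μ (1/2 + deltaD σ μ) (1/2 + deltaD σ μ) = 0) ∧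
    (F1 σ μ (1/2 - deltaD σ μ) (1/2 - deltaD σ μ) = 0 ∧
      F2 σ μ (1/2 - deltaD σ μ) (1/2 - deltaD σ μ) = 0) :=
  convergent_equilibria_exist_general σ μ hlo hhi
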